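/- For every σ ≥ 0 and every ρ ∈ (0, 1], g(U(ρ), σ, ρ) · ( f_WM(U(ρ), ρ) − f_SF(U(ρ), U′(ρ) − U(ρ)/ρ, ρ·U′(ρ), ρ) ) = 20(105 − 42ρ² + ρ⁴) / ( (5 − ρ²)^{3/2} · (64(5 − ρ²) + σ²(5 + 3ρ²)²) ). -/

import Mathlib

open Real Set

/-- The blowup profile `U(ρ) = 2 arctan(2ρ/√(5-ρ²))`. -/
noncomputable def U (ρ : ℝ) : ℝ := 2 * Real.arctan (2 * ρ / Real.sqrt (5 - ρ ^ 2))

/-- The strong field nonlinearity `f_SF`. -/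
noncomputable def fSF (x y z r : ℝ) : ℝ :=
  -(1 / r) * Real.cot x * (z ^ 2 - y ^ 2) - (2 / r ^ 2) * (1 - x * Real.cot x) * y
    - ((3 / 2) * Real.sin (2 * x) - 2 * x - x ^ 2 * Real.cot x) / r ^ 3

/-- The wave maps nonlinearity `f_WM`. -/
noncomputable def fWM (x r : ℝ) : ℝ := (4 * x - 2 * Real.sin (2 * x)) / r ^ 3

/-- The multiplier `g(x,σ,r) = (σ² + 4sin²(x)/r²)⁻¹`. -/
noncomputable def gMult (x σ r : ℝ) : ℝ := (σ ^ 2 + 4 * Real.sin x ^ 2 / r ^ 2)⁻¹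

lemma sin_U {ρ : ℝ} (hρ : 0 < ρ) (hρ1 : ρ ≤ 1) :
    Real.sin (U ρ) = 4 * ρ * Real.sqrt (5 - ρ ^ 2) / (5 + 3 * ρ ^ 2) := by
  have h5 : (0:ℝ) < 5 - ρ ^ 2 := by nlinarith
  set s := Real.sqrt (5 - ρ ^ 2) with hsdef
  have hs : 0 < s := Real.sqrt_pos.mpr h5
  have hs2 : s ^ 2 = 5 - ρ ^ 2 := Real.sq_sqrt h5.le
  have hq : (0:ℝ) < 1 + (2 * ρ / s) ^ 2 := by positivity
  have hq2 : Real.sqrt (1 + (2 * ρ / s) ^ 2) ^ 2 = 1 + (2 * ρ / s) ^ 2 := Real.sq_sqrt hq.le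
  have hqpos : 0 < Real.sqrt (1 + (2 * ρ / s) ^ 2) := Real.sqrt_pos.mpr hq
  set q := Real.sqrt (1 + (2 * ρ / s) ^ 2) with hqdef
  have hq2' : s ^ 2 * q ^ 2 = 5 + 3 * ρ ^ 2 := by
    rw [hq2]
    field_simp
    linear_combination hs2
  have h35 : (0:ℝ) < 5 + 3 * ρ ^ 2 := by positivity
  unfold U
  rw [Real.sin_two_mul, Real.sin_arctan, Real.cos_arctan, ← hsdef, ← hqdef]
  field_simp
  linear_combination (-4)*hq2'

lemma cos_U {ρ : ℝ} (hρ : 0 < ρ) (hρ1 : ρ ≤ 1) :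
    Real.cos (U ρ) = 5 * (1 - ρ ^ 2) / (5 + 3 * ρ ^ 2) := by
  have h5 : (0:ℝ) < 5 - ρ ^ 2 := by nlinarith
  set s := Real.sqrt (5 - ρ ^ 2) with hsdef
  have hs : 0 < s := Real.sqrt_pos.mpr h5
  have hs2 : s ^ 2 = 5 - ρ ^ 2 := Real.sq_sqrt h5.le
  have hq : (0:ℝ) < 1 + (2 * ρ / s) ^ 2 := by positivity
  have hq2 : Real.sqrt (1 + (2 * ρ / s) ^ 2) ^ 2 = 1 + (2 * ρ / s) ^ 2 := Real.sq_sqrt hq.le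
  have hqpos : 0 < Real.sqrt (1 + (2 * ρ / s) ^ 2) := Real.sqrt_pos.mpr hq
  set q := Real.sqrt (1 + (2 * ρ / s) ^ 2) with hqdef
  have hq2' : s ^ 2 * q ^ 2 = 5 + 3 * ρ ^ 2 := by
    rw [hq2]
    field_simp
    linear_combination hs2
  have hq3 : q ^ 2 = (5 + 3 * ρ ^ 2) / (5 - ρ ^ 2) := by
    rw [eq_div_iff h5.ne']
    linear_combination hq2' - q ^ 2 * hs2
  have h35 : (0:ℝ) < 5 + 3 * ρ ^ 2 := by positivity
  unfold U
  rw [Real.cos_two_mul, Real.cos_arctan, ← hsdef, ← hqdef]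
  rw [div_pow, one_pow, hq3]
  field_simp
  ring

lemma hasDerivAt_U {ρ : ℝ} (hρ : 0 < ρ) (hρ1 : ρ ≤ 1) :
    HasDerivAt U (20 / (Real.sqrt (5 - ρ ^ 2) * (5 + 3 * ρ ^ 2))) ρ := by
  have h5 : (0:ℝ) < 5 - ρ ^ 2 := by nlinarith
  set s := Real.sqrt (5 - ρ ^ 2) with hsdef
  have hs : 0 < s := Real.sqrt_pos.mpr h5
  have hs2 : s ^ 2 = 5 - ρ ^ 2 := Real.sq_sqrt h5.le
  have h1 : HasDerivAt (fun x : ℝ => 5 - x ^ 2) (-(2 * ρ)) ρ := by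
    simpa using (hasDerivAt_pow 2 ρ).const_sub 5
  have h2 := h1.sqrt h5.ne'
  have h3 : HasDerivAt (fun x : ℝ => 2 * x) 2 ρ := by
    simpa using (hasDerivAt_id ρ).const_mul 2
  have h4 := h3.div h2 hs.ne'
  have h6 := ((Real.hasDerivAt_arctan (2 * ρ / s)).comp ρ h4).const_mul 2
  have h35 : (0:ℝ) < 5 + 3 * ρ ^ 2 := by positivity
  refine h6.congr_deriv ?_
  symm
  rw [← hsdef]
  field_simp
  linear_combination (-12) * ρ ^ 2 * hs2

lemma step1 (u d ρ : ℝ) (hρ : ρ ≠ 0) :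
    fWM u ρ - fSF u (d - u / ρ) (ρ * d) ρ =
      -(1 / 2) * Real.sin (2 * u) / ρ ^ 3 + (ρ ^ 2 - 1) * Real.cot u * d ^ 2 / ρ
        + 2 * d / ρ ^ 2 := by
  unfold fWM fSF
  field_simp
  ring

theorem zeroth_order_coefficient :
    ∀ σ ρ : ℝ, 0 ≤ σ → 0 < ρ → ρ ≤ 1 →
      gMult (U ρ) σ ρ *
          (fWM (U ρ) ρ - fSF (U ρ) (deriv U ρ - U ρ / ρ) (ρ * deriv U ρ) ρ)
        = 20 * (105 - 42 * ρ ^ 2 + ρ ^ 4) /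
            ((5 - ρ ^ 2) ^ ((3 : ℝ) / 2) *
              (64 * (5 - ρ ^ 2) + σ ^ 2 * (5 + 3 * ρ ^ 2) ^ 2)) := by
  intro σ ρ hσ hρ hρ1
  have h5 : (0:ℝ) < 5 - ρ ^ 2 := by nlinarith
  set s := Real.sqrt (5 - ρ ^ 2) with hsdef
  have hs : 0 < s := Real.sqrt_pos.mpr h5
  have hs2 : s ^ 2 = 5 - ρ ^ 2 := Real.sq_sqrt h5.le
  have h35 : (0:ℝ) < 5 + 3 * ρ ^ 2 := by positivity
  have hU' : deriv U ρ = 20 / (s * (5 + 3 * ρ ^ 2)) := (hasDerivAt_U hρ hρ1).deriv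
  have h32 : (5 - ρ ^ 2) ^ ((3:ℝ)/2) = s ^ 3 := by
    rw [hsdef, Real.sqrt_eq_rpow, ← Real.rpow_natCast ((5 - ρ ^ 2) ^ ((1:ℝ)/2)) 3,
      ← Real.rpow_mul h5.le]
    norm_num
  have hden : (0:ℝ) < 64 * (5 - ρ ^ 2) + σ ^ 2 * (5 + 3 * ρ ^ 2) ^ 2 := by positivity
  have hcot : Real.cot (U ρ) = 5 * (1 - ρ ^ 2) / (4 * ρ * s) := by
    rw [Real.cot_eq_cos_div_sin, sin_U hρ hρ1, cos_U hρ hρ1, ← hsdef]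
    field_simp
  have hsin2 : Real.sin (2 * U ρ) = 40 * ρ * s * (1 - ρ ^ 2) / (5 + 3 * ρ ^ 2) ^ 2 := by
    rw [Real.sin_two_mul, sin_U hρ hρ1, cos_U hρ hρ1, ← hsdef]
    field_simp
    ring
  have step2 : -(1 / 2) * Real.sin (2 * U ρ) / ρ ^ 3
        + (ρ ^ 2 - 1) * Real.cot (U ρ) * (20 / (s * (5 + 3 * ρ ^ 2))) ^ 2 / ρ
        + 2 * (20 / (s * (5 + 3 * ρ ^ 2))) / ρ ^ 2
      = 20 * (105 - 42 * ρ ^ 2 + ρ ^ 4) / (s ^ 3 * (5 + 3 * ρ ^ 2) ^ 2) := by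
    rw [hcot, hsin2]
    field_simp
    linear_combination (800 - 160 * s ^ 2 + 1920 * ρ ^ 2 + 160 * ρ ^ 2 * s ^ 2 - 160 * ρ ^ 4) * hs2
  have hgval : gMult (U ρ) σ ρ
      = (5 + 3 * ρ ^ 2) ^ 2 / (64 * (5 - ρ ^ 2) + σ ^ 2 * (5 + 3 * ρ ^ 2) ^ 2) := by
    unfold gMult
    rw [sin_U hρ hρ1, ← hsdef]
    rw [eq_div_iff hden.ne', inv_mul_eq_iff_eq_mul₀ (by positivity)]
    field_simp
    linear_combination (-64) * hs2
  rw [step1 (U ρ) (deriv U ρ) ρ hρ.ne', hU', step2, hgval, h32]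
  rw [div_mul_div_comm]
  rw [div_eq_div_iff (by positivity) (by positivity)]
  ring
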